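/- Let G be a finite simple graph of order n and size m, let k be an integer, and suppose {S₁,...,S_r} is a partition of the vertex set of G into r ≥ 2 global defensive k-alliances. Let c be the number of edges of G having endpoints in different sets of the partition. Then (i) c ≥ (1/2)·r·(r-1)·γ_k^d(G); (ii) c ≥ (1/2)·r·(r-1)·(r+k); and (iii) c ≤ (2m - nk)/4. -/

import Mathlib

/-!
Counting darts, `2c = ∑ v, δ_{V∖S(v)}(v)`, where `S(v)` is the part containing `v`. Each of the
other `r - 1` parts dominates `v`, so `δ_{V∖S(v)}(v) ≥ r - 1` and `2c ≥ (r - 1) n`; the alliance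
condition then gives `|S| ≥ δ_S(v) + 1 ≥ r + k` for every part, so `n = ∑ |S| ≥ r (r + k)`, and
also `n ≥ r γ_k^d(G)`. Conversely the alliance condition gives `deg v ≥ 2 δ_{V∖S(v)}(v) + k`,
which summed over `v` is `2m ≥ 4c + nk`.
-/

open Finset

variable {V : Type*}

/-- `degIn G S v` is the number of neighbors that `v` has in `S` (denoted `δ_S(v)`). -/
def degIn [Fintype V] [DecidableEq V] (G : SimpleGraph V) [DecidableRel G.Adj]
    (S : Finset V) (v : V) : ℕ :=
  (G.neighborFinset v ∩ S).card

def IsDefensiveKAlliance [Fintype V] [DecidableEq V] (G : SimpleGraph V) [DecidableRel G.Adj]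
    (k : ℤ) (S : Finset V) : Prop :=
  S.Nonempty ∧ ∀ v ∈ S, (degIn G Sᶜ v : ℤ) + k ≤ (degIn G S v : ℤ)

noncomputable def defensiveAllianceNum [Fintype V] [DecidableEq V] (G : SimpleGraph V)
    [DecidableRel G.Adj] (k : ℤ) : ℕ :=
  sInf {m : ℕ | ∃ S : Finset V, IsDefensiveKAlliance G k S ∧ S.card = m}

def IsDominatingSet (G : SimpleGraph V) (S : Finset V) : Prop :=
  ∀ v, v ∉ S → ∃ u ∈ S, G.Adj u v

def IsGlobalDefensiveKAlliance [Fintype V] [DecidableEq V] (G : SimpleGraph V)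
    [DecidableRel G.Adj] (k : ℤ) (S : Finset V) : Prop :=
  IsDefensiveKAlliance G k S ∧ IsDominatingSet G S

/-- The global defensive `k`-alliance number `γ_k^d(G)`. -/
noncomputable def globalDefensiveAllianceNum [Fintype V] [DecidableEq V] (G : SimpleGraph V)
    [DecidableRel G.Adj] (k : ℤ) : ℕ :=
  sInf {m : ℕ | ∃ S : Finset V, IsGlobalDefensiveKAlliance G k S ∧ S.card = m}

lemma Finpartition.exists_forall_mem_sym2_iff [DecidableEq V] {s : Finset V}
    (P : Finpartition s) (u v : V) :
    (∃ p ∈ P.parts, ∀ w ∈ s(u, v), w ∈ p) ↔ v ∈ P.part u := by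
  simp only [Sym2.mem_iff, forall_eq_or_imp, forall_eq, P.mem_part_iff_exists, and_comm]

section

variable [Fintype V] [DecidableEq V] (G : SimpleGraph V) [DecidableRel G.Adj]

lemma card_filter_dart_edge_mem {s : Finset (Sym2 V)} (hs : s ⊆ G.edgeFinset) :
    #{d : G.Dart | d.edge ∈ s} = 2 * #s := by
  rw [card_eq_sum_card_fiberwise (s := {d : G.Dart | d.edge ∈ s}) (t := s)
    fun d hd => (mem_filter.1 hd).2, mul_comm]
  refine sum_const_nat fun e he => ?_
  rw [filter_filter, ← G.dart_edge_fiber_card e (G.mem_edgeFinset.1 (hs he))]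
  congr 1
  exact filter_congr fun d _ => ⟨fun h => h.2, fun h => ⟨h ▸ he, h⟩⟩

lemma sum_degIn_eq_card_filter_dart (S : V → Finset V) :
    ∑ v, degIn G (S v) v = #{d : G.Dart | d.snd ∈ S d.fst} := by
  rw [card_eq_sum_card_fiberwise (t := univ) fun d _ => mem_univ d.fst]
  refine sum_congr rfl fun v _ => (card_nbij (·.snd) ?_ ?_ ?_).symm
  · intro d hd
    rw [mem_coe, filter_filter, mem_filter] at hd
    obtain ⟨-, hS, rfl⟩ := hd
    exact mem_inter.2 ⟨(G.mem_neighborFinset _ _).2 d.adj, hS⟩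
  · intro d₁ h₁ d₂ h₂ h
    rw [mem_coe, filter_filter, mem_filter] at h₁ h₂
    exact SimpleGraph.Dart.ext _ _ (Prod.ext (h₁.2.2.trans h₂.2.2.symm) h)
  · intro w hw
    simp only [coe_inter, Set.mem_inter_iff, mem_coe, SimpleGraph.mem_neighborFinset] at hw
    exact ⟨⟨(v, w), hw.1⟩, by simpa using hw.2, rfl⟩

lemma degIn_add_degIn_compl (S : Finset V) (v : V) :
    degIn G S v + degIn G Sᶜ v = G.degree v := by
  rw [degIn, degIn, ← sdiff_eq_inter_compl, card_inter_add_card_sdiff,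
    SimpleGraph.card_neighborFinset_eq_degree]

lemma degIn_add_one_le_card {S : Finset V} {v : V} (hv : v ∈ S) : degIn G S v + 1 ≤ #S := by
  rw [← card_erase_add_one hv, degIn]
  gcongr
  intro w hw
  rw [mem_inter, SimpleGraph.mem_neighborFinset] at hw
  exact mem_erase.2 ⟨hw.1.ne', hw.2⟩

lemma IsDefensiveKAlliance.two_mul_degIn_compl_add_le_degree {k : ℤ} {S : Finset V}
    (h : IsDefensiveKAlliance G k S) {v : V} (hv : v ∈ S) :
    2 * (degIn G Sᶜ v : ℤ) + k ≤ G.degree v := by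
  have hdef := h.2 v hv
  have hsplit := degIn_add_degIn_compl G S v
  omega

def crossingEdges (P : Finpartition (univ : Finset V)) : Finset (Sym2 V) :=
  G.edgeFinset.filter fun e => ¬ ∃ p ∈ P.parts, ∀ v ∈ e, v ∈ p

lemma two_mul_card_crossingEdges (P : Finpartition (univ : Finset V)) :
    2 * #(crossingEdges G P) = ∑ v, degIn G (P.part v)ᶜ v := by
  rw [sum_degIn_eq_card_filter_dart,
    ← card_filter_dart_edge_mem G (s := crossingEdges G P) (filter_subset _ _)]
  congr 1
  refine filter_congr fun d _ => ?_
  rw [crossingEdges, mem_filter, mem_compl, ← P.exists_forall_mem_sym2_iff]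
  exact and_iff_right (G.mem_edgeFinset.2 d.edge_mem)

variable {G}

lemma card_parts_le_degIn_compl_add_one {P : Finpartition (univ : Finset V)}
    (hdom : ∀ p ∈ P.parts, IsDominatingSet G p) {q : Finset V} (hq : q ∈ P.parts) {v : V}
    (hv : v ∈ q) : #P.parts ≤ degIn G qᶜ v + 1 := by
  rw [← card_erase_add_one hq, add_le_add_iff_right]
  refine card_le_card_of_surjOn P.part fun p hp => ?_
  obtain ⟨hpq, hp⟩ := mem_erase.1 hp
  obtain ⟨u, hu, hadj⟩ := hdom p hp v fun hvp => hpq (P.eq_of_mem_parts hp hq hvp hv)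
  have huq : u ∉ q := fun huq => hpq (P.eq_of_mem_parts hp hq hu huq)
  exact ⟨u, mem_inter.2 ⟨(G.mem_neighborFinset _ _).2 hadj.symm, mem_compl.2 huq⟩,
    P.part_eq_of_mem hp hu⟩

lemma card_parts_sub_one_mul_card_le_two_mul_card_crossingEdges
    {P : Finpartition (univ : Finset V)} (hdom : ∀ p ∈ P.parts, IsDominatingSet G p) :
    ((#P.parts : ℤ) - 1) * Fintype.card V ≤ 2 * #(crossingEdges G P) := by
  have h := card_nsmul_le_sum univ (fun v => (degIn G (P.part v)ᶜ v : ℤ)) (#P.parts - 1)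
    fun v _ => by
      have := card_parts_le_degIn_compl_add_one hdom (P.part_mem.2 (mem_univ v))
        (P.mem_part (mem_univ v))
      omega
  rw [← Nat.cast_sum, ← two_mul_card_crossingEdges, card_univ, nsmul_eq_mul] at h
  push_cast at h
  linarith

lemma four_mul_card_crossingEdges_add_le {k : ℤ} {P : Finpartition (univ : Finset V)}
    (hdef : ∀ p ∈ P.parts, IsDefensiveKAlliance G k p) :
    4 * (#(crossingEdges G P) : ℤ) + Fintype.card V * k ≤ 2 * #G.edgeFinset := by
  have h := sum_le_sum fun v (_ : v ∈ univ) =>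
    (hdef _ (P.part_mem.2 (mem_univ v))).two_mul_degIn_compl_add_le_degree G
      (P.mem_part (mem_univ v))
  rw [sum_add_distrib, ← mul_sum, sum_const, card_univ, nsmul_eq_mul, ← Nat.cast_sum,
    ← two_mul_card_crossingEdges, ← Nat.cast_sum, G.sum_degrees_eq_twice_card_edges] at h
  push_cast at h
  linarith

lemma card_parts_add_le_card {k : ℤ} {P : Finpartition (univ : Finset V)}
    (hparts : ∀ p ∈ P.parts, IsGlobalDefensiveKAlliance G k p) {q : Finset V}
    (hq : q ∈ P.parts) : (#P.parts : ℤ) + k ≤ #q := by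
  obtain ⟨⟨⟨v, hv⟩, hdef⟩, -⟩ := hparts q hq
  have hin := hdef v hv
  have hout := card_parts_le_degIn_compl_add_one (fun p hp => (hparts p hp).2) hq hv
  have hcard := degIn_add_one_le_card G hv
  omega

lemma card_parts_mul_card_parts_add_le {k : ℤ} {P : Finpartition (univ : Finset V)}
    (hparts : ∀ p ∈ P.parts, IsGlobalDefensiveKAlliance G k p) :
    (#P.parts : ℤ) * (#P.parts + k) ≤ Fintype.card V := by
  rw [← card_univ, ← P.sum_card_parts, Nat.cast_sum, ← nsmul_eq_mul]
  exact card_nsmul_le_sum _ _ _ fun q hq => card_parts_add_le_card hparts hq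

lemma card_parts_mul_globalDefensiveAllianceNum_le {k : ℤ} {P : Finpartition (univ : Finset V)}
    (hparts : ∀ p ∈ P.parts, IsGlobalDefensiveKAlliance G k p) :
    #P.parts * globalDefensiveAllianceNum G k ≤ Fintype.card V := by
  rw [← card_univ, ← P.sum_card_parts, ← smul_eq_mul]
  exact card_nsmul_le_sum _ _ _ fun q hq => Nat.sInf_le ⟨q, hparts q hq, rfl⟩

end

/-- Theorem: if the vertex set of `G` is partitioned into `r ≥ 2` global defensive
`k`-alliances and `c` is the number of edges with endpoints in different sets of the
partition, then (i) `c ≥ (1/2)r(r-1)γ_k^d(G)`, (ii) `c ≥ (1/2)r(r-1)(r+k)` and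
(iii) `c ≤ (2m - nk)/4`. -/
theorem partition_globalDefensiveKAlliances_crossing_edges [Fintype V] [DecidableEq V]
    (G : SimpleGraph V) [DecidableRel G.Adj] (k : ℤ) (r : ℕ) (hr : 2 ≤ r)
    (P : Finpartition (univ : Finset V)) (hcard : P.parts.card = r)
    (hparts : ∀ p ∈ P.parts, IsGlobalDefensiveKAlliance G k p)
    (c : ℕ)
    (hc : c = (G.edgeFinset.filter fun e => ¬ ∃ p ∈ P.parts, ∀ v ∈ e, v ∈ p).card) :
    (1 / 2 : ℚ) * (r : ℚ) * ((r : ℚ) - 1) * (globalDefensiveAllianceNum G k : ℚ) ≤ (c : ℚ) ∧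
      (1 / 2 : ℚ) * (r : ℚ) * ((r : ℚ) - 1) * ((r : ℚ) + (k : ℚ)) ≤ (c : ℚ) ∧
      (c : ℚ) ≤ (2 * (G.edgeFinset.card : ℚ) - (Fintype.card V : ℚ) * (k : ℚ)) / 4 := by
  change c = #(crossingEdges G P) at hc
  subst hcard hc
  have hlow : ((#P.parts : ℚ) - 1) * Fintype.card V ≤ 2 * #(crossingEdges G P) := by
    exact_mod_cast card_parts_sub_one_mul_card_le_two_mul_card_crossingEdges
      fun p hp => (hparts p hp).2
  have hγ : (#P.parts : ℚ) * globalDefensiveAllianceNum G k ≤ Fintype.card V := by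
    exact_mod_cast card_parts_mul_globalDefensiveAllianceNum_le hparts
  have hrk : (#P.parts : ℚ) * (#P.parts + k) ≤ Fintype.card V := by
    exact_mod_cast card_parts_mul_card_parts_add_le hparts
  have hupp : 4 * (#(crossingEdges G P) : ℚ) + Fintype.card V * k ≤ 2 * #G.edgeFinset := by
    exact_mod_cast four_mul_card_crossingEdges_add_le fun p hp => (hparts p hp).1
  have hr₁ : (0 : ℚ) ≤ #P.parts - 1 := by
    rw [sub_nonneg]
    exact_mod_cast (by omega : 1 ≤ #P.parts)
  refine ⟨?_, ?_, by linarith⟩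
  · linarith [mul_le_mul_of_nonneg_left hγ hr₁]
  · linarith [mul_le_mul_of_nonneg_left hrk hr₁]
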